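/- For any type τ of PRED2₀ (generated by τ ::= o | B | B → τ) and any finite set Δ of PRED2₀ formulas, there exists a λ-term t such that Γ(Δ) ⊢ A_τ t in I₀. -/
import Mathlib


/-! Infrastructure: type-free λ-terms over a set of constants, βη-conversion,
and the illative systems Iω, Iω^c and I₀ of Barendregt–Bunder–Dekkers style,
following Czajka, "A semantic approach to illative combinatory logic". -/

namespace ICL

/-- Type-free λ-terms over a set `C` of primitive constants (de Bruijn representation). -/
inductive Tm (C : Type) : Type
  | var : Nat → Tm C
  | const : C → Tm C
  | app : Tm C → Tm C → Tm C
  | lam : Tm C → Tm C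

namespace Tm

variable {C : Type}

/-- Renaming of free de Bruijn variables. -/
def rename (f : Nat → Nat) : Tm C → Tm C
  | .var n => .var (f n)
  | .const c => .const c
  | .app a b => .app (a.rename f) (b.rename f)
  | .lam a => .lam (a.rename fun n => match n with | 0 => 0 | m + 1 => f m + 1)

/-- Shift all free variables up by one. -/
def lift (t : Tm C) : Tm C := t.rename (· + 1)

/-- Simultaneous (capture-avoiding) substitution. -/
def bind (σ : Nat → Tm C) : Tm C → Tm C
  | .var n => σ n
  | .const c => .const c
  | .app a b => .app (a.bind σ) (b.bind σ)
  | .lam a => .lam (a.bind fun n => match n with | 0 => .var 0 | m + 1 => (σ m).lift)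

/-- Substitution of `s` for the variable `0` (β-contraction of `(λ.t) s`). -/
def subst0 (t s : Tm C) : Tm C := t.bind fun n => match n with | 0 => s | m + 1 => .var m

/-- The set of free variables of a term. -/
def fvar : Tm C → Set Nat
  | .var n => {n}
  | .const _ => ∅
  | .app a b => fvar a ∪ fvar b
  | .lam a => {n | n + 1 ∈ fvar a}

end Tm

/-- One-step βη-reduction (closed under arbitrary contexts). -/
inductive BetaEta {C : Type} : Tm C → Tm C → Prop
  | beta (t s : Tm C) : BetaEta (.app (.lam t) s) (t.subst0 s)
  | eta (t : Tm C) : BetaEta (.lam (.app t.lift (.var 0))) t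
  | appL {t t' : Tm C} (s : Tm C) : BetaEta t t' → BetaEta (.app t s) (.app t' s)
  | appR (t : Tm C) {s s' : Tm C} : BetaEta s s' → BetaEta (.app t s) (.app t s')
  | lam {t t' : Tm C} : BetaEta t t' → BetaEta (.lam t) (.lam t')

/-- βη-convertibility `=βη`. -/
def Conv {C : Type} : Tm C → Tm C → Prop := Relation.EqvGen BetaEta

/-- The term `Ξ`. -/
def XiT {C : Type} (cXi : C) : Tm C := .const cXi

/-- The term `L`. -/
def LT {C : Type} (cL : C) : Tm C := .const cL

/-- The term `H = λx. L (K x) = λx. L (λy. x)`. -/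
def Hc {C : Type} (cL : C) : Tm C := .lam (.app (.const cL) (.lam (.var 1)))

/-- The term `⊃ = λx y. Ξ (K x) (K y)`. -/
def impC {C : Type} (cXi : C) : Tm C :=
  .lam (.lam (.app (.app (.const cXi) (.lam (.var 2))) (.lam (.var 1))))

/-- `t₁ ⊃ t₂` (infix application of `⊃`). -/
def impTm {C : Type} (cXi : C) (t1 t2 : Tm C) : Tm C := .app (.app (impC cXi) t1) t2

/-- The term `F = λx y f. Ξ x (λz. y (f z))`. -/
def Fcomb {C : Type} (cXi : C) : Tm C :=
  .lam (.lam (.lam (.app (.app (.const cXi) (.var 2))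
    (.lam (.app (.var 2) (.app (.var 1) (.var 0)))))))

/-- The term `⊥ = Ξ H I`, where `I = λx.x`. -/
def botT {C : Type} (cXi cL : C) : Tm C := .app (.app (XiT cXi) (Hc cL)) (.lam (.var 0))

/-- The double-negation axiom term `Ξ H (λx. ((x ⊃ ⊥) ⊃ ⊥) ⊃ x)`. -/
def dnAx {C : Type} (cXi cL : C) : Tm C :=
  .app (.app (XiT cXi) (Hc cL))
    (.lam (impTm cXi (impTm cXi (impTm cXi (.var 0) (botT cXi cL)) (botT cXi cL)) (.var 0)))

/-- Free variables of a set of terms. -/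
def fvS {C : Type} (Γ : Set (Tm C)) : Set Nat := ⋃ t ∈ Γ, t.fvar

/-- The illative derivability judgement `Γ ⊢ t`.  The flag `fl` enables the rule `F_L`
(giving `Iω` when `fl = true`, and `I₀` when `fl = false`); the flag `dn` enables the
double-negation axiom (giving the classical variant `Iω^c`). -/
inductive IDeriv {B C : Type} (cXi cL : C) (cA : B → C) (fl dn : Bool) :
    Set (Tm C) → Tm C → Prop
  | ax {Γ : Set (Tm C)} {t : Tm C} : t ∈ Γ → IDeriv cXi cL cA fl dn Γ t
  | axLH {Γ : Set (Tm C)} : IDeriv cXi cL cA fl dn Γ (.app (LT cL) (Hc cL))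
  | axLA {Γ : Set (Tm C)} (b : B) : IDeriv cXi cL cA fl dn Γ (.app (LT cL) (.const (cA b)))
  | axDN {Γ : Set (Tm C)} : dn = true → IDeriv cXi cL cA fl dn Γ (dnAx cXi cL)
  | eq {Γ : Set (Tm C)} {t1 t2 : Tm C} :
      IDeriv cXi cL cA fl dn Γ t1 → Conv t1 t2 → IDeriv cXi cL cA fl dn Γ t2
  | hi {Γ : Set (Tm C)} {t : Tm C} :
      IDeriv cXi cL cA fl dn Γ t → IDeriv cXi cL cA fl dn Γ (.app (Hc cL) t)
  | xiE {Γ : Set (Tm C)} {t1 t2 t3 : Tm C} :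
      IDeriv cXi cL cA fl dn Γ (.app (.app (XiT cXi) t1) t2) →
      IDeriv cXi cL cA fl dn Γ (.app t1 t3) →
      IDeriv cXi cL cA fl dn Γ (.app t2 t3)
  | xiI {Γ : Set (Tm C)} {t1 t2 : Tm C} (x : Nat) :
      IDeriv cXi cL cA fl dn (insert (.app t1 (.var x)) Γ) (.app t2 (.var x)) →
      IDeriv cXi cL cA fl dn Γ (.app (LT cL) t1) →
      x ∉ fvS Γ → x ∉ t1.fvar → x ∉ t2.fvar →
      IDeriv cXi cL cA fl dn Γ (.app (.app (XiT cXi) t1) t2)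
  | xiH {Γ : Set (Tm C)} {t1 t2 : Tm C} (x : Nat) :
      IDeriv cXi cL cA fl dn (insert (.app t1 (.var x)) Γ) (.app (Hc cL) (.app t2 (.var x))) →
      IDeriv cXi cL cA fl dn Γ (.app (LT cL) t1) →
      x ∉ fvS Γ → x ∉ t1.fvar → x ∉ t2.fvar →
      IDeriv cXi cL cA fl dn Γ (.app (Hc cL) (.app (.app (XiT cXi) t1) t2))
  | fL {Γ : Set (Tm C)} {t1 t2 : Tm C} (x : Nat) : fl = true →
      IDeriv cXi cL cA fl dn (insert (.app t1 (.var x)) Γ) (.app (LT cL) t2) →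
      IDeriv cXi cL cA fl dn Γ (.app (LT cL) t1) →
      x ∉ fvS Γ → x ∉ t1.fvar → x ∉ t2.fvar →
      IDeriv cXi cL cA fl dn Γ (.app (.app (Fcomb cXi) t1) t2)

end ICL


/-! Infrastructure: the system PRED2₀ of first-order many-sorted intuitionistic
predicate logic with second-order propositional quantifiers, and its (simplified)
Kripke semantics, following Czajka, "A semantic approach to illative combinatory
logic", Section 2. -/

namespace PRED2

/-- Types of PRED2₀ : `τ ::= o | B | B → τ`, for a set `B` of base types. -/
inductive Ty (B : Type) : Type
  | o : Ty B
  | base : B → Ty B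
  | arr : B → Ty B → Ty B
deriving DecidableEq

/-- The types over which quantification is allowed: `B ∪ {o}`. -/
def QTy {B : Type} (τ : Ty B) : Prop := τ = .o ∨ ∃ b, τ = .base b

/-- Terms of PRED2₀ over a signature `Con` (with `Con τ` the constants of type `τ`).
Variables of type `τ` are indexed by natural numbers.  Terms of type `.o` are the
formulas. -/
inductive Trm (B : Type) (Con : Ty B → Type) : Ty B → Type
  | var (τ : Ty B) (n : Nat) : Trm B Con τ
  | con {τ : Ty B} (c : Con τ) : Trm B Con τ
  | app {b : B} {τ : Ty B} (f : Trm B Con (.arr b τ)) (a : Trm B Con (.base b)) : Trm B Con τ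
  | imp (φ ψ : Trm B Con .o) : Trm B Con .o
  | all (τ : Ty B) (hτ : QTy τ) (m : Nat) (φ : Trm B Con .o) : Trm B Con .o

variable {B : Type} [DecidableEq B] {Con : Ty B → Type}

/-- Free variables of a term (a variable is a pair of its type and its index). -/
def FV : {τ : Ty B} → Trm B Con τ → Finset (Ty B × Nat)
  | _, .var τ n => {(τ, n)}
  | _, .con _ => ∅
  | _, .app f a => FV f ∪ FV a
  | _, .imp φ ψ => FV φ ∪ FV ψ
  | _, .all τ _ m φ => (FV φ).erase (τ, m)

/-- Update a (term-valued) valuation at the variable `(τ0, m)`. -/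
def vupd (v : ∀ τ : Ty B, Nat → Trm B Con τ) (τ0 : Ty B) (m : Nat) (t : Trm B Con τ0) :
    ∀ τ : Ty B, Nat → Trm B Con τ :=
  fun τ n => if h : τ = τ0 then (if n = m then h.symm ▸ t else v τ n) else v τ n

/-- The identity substitution. -/
def vid : ∀ τ : Ty B, Nat → Trm B Con τ := fun τ n => .var τ n

/-- A number strictly larger than the index of any variable free in any `v y`
for `y ∈ s`; used to choose fresh names for bound variables. -/
def fresh (v : ∀ τ : Ty B, Nat → Trm B Con τ) (s : Finset (Ty B × Nat)) : Nat :=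
  (s.sup fun y => (FV (v y.1 y.2)).sup fun z => z.2) + 1

/-- Simultaneous capture-avoiding substitution: bound variables are renamed to
fresh ones so that no free variable of the substituted terms is captured. -/
def substV (v : ∀ τ : Ty B, Nat → Trm B Con τ) : {τ : Ty B} → Trm B Con τ → Trm B Con τ
  | _, .var τ n => v τ n
  | _, .con c => .con c
  | _, .app f a => .app (substV v f) (substV v a)
  | _, .imp φ ψ => .imp (substV v φ) (substV v ψ)
  | _, .all τ h m φ =>
      let m' := fresh v ((FV φ).erase (τ, m))
      .all τ h m' (substV (vupd v τ m (.var τ m')) φ)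

/-- `φ[x/t]` : capture-avoiding substitution of the term `t` for all free
occurrences of the variable `x = (τ, m)`. -/
def subst1 (τ : Ty B) (m : Nat) (t : Trm B Con τ) {τ' : Ty B} (φ : Trm B Con τ') :
    Trm B Con τ' :=
  substV (vupd vid τ m t) φ

/-- Derivability in PRED2₀ (for a set `Δ` of hypotheses; the rules are the axiom,
`⊃`-introduction and elimination, and `∀`-introduction and elimination). -/
inductive Deriv : Set (Trm B Con .o) → Trm B Con .o → Prop
  | ax {Δ : Set (Trm B Con .o)} {φ} : φ ∈ Δ → Deriv Δ φ
  | impI {Δ : Set (Trm B Con .o)} {φ ψ} : Deriv (insert φ Δ) ψ → Deriv Δ (.imp φ ψ)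
  | impE {Δ : Set (Trm B Con .o)} {φ ψ} : Deriv Δ (.imp φ ψ) → Deriv Δ φ → Deriv Δ ψ
  | allI {Δ : Set (Trm B Con .o)} (τ : Ty B) (hτ : QTy τ) (m : Nat) {φ} :
      Deriv Δ φ → (∀ ψ ∈ Δ, (τ, m) ∉ FV ψ) → Deriv Δ (.all τ hτ m φ)
  | allE {Δ : Set (Trm B Con .o)} {τ : Ty B} {hτ : QTy τ} {m : Nat} {φ} (t : Trm B Con τ) :
      Deriv Δ (.all τ hτ m φ) → Deriv Δ (subst1 τ m t φ)

/-- `Δ ⊢ φ` for an arbitrary set `Δ`: some finite subset of `Δ` derives `φ`. -/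
def DerivFrom (Δ : Set (Trm B Con .o)) (φ : Trm B Con .o) : Prop :=
  ∃ Δ' ⊆ Δ, Δ'.Finite ∧ Deriv Δ' φ

end PRED2

namespace Embed

open ICL PRED2

/-- The primitive constants of the illative system `I₀` used for the embedding:
`Ξ`, `L`, `A_τ` for base types `τ`, and a constant for every constant of the
PRED2₀ signature. -/
inductive SCon (B : Type) (Con : PRED2.Ty B → Type) : Type
  | Xi : SCon B Con
  | L : SCon B Con
  | A : B → SCon B Con
  | sig : {τ : PRED2.Ty B} → Con τ → SCon B Con

variable {B : Type} [DecidableEq B] {Con : PRED2.Ty B → Type}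

/-- `F t₁ t₂`, written out according to the notational convention:
`λf. Ξ t₁ (λx. t₂ (f x))` if `t₂` is not a λ-abstraction, and
`λf. Ξ t₁ (λx. q₂[z/(f x)])` if `t₂ = λz. q₂`. -/
def Ft {C : Type} (cXi : C) (t1 t2 : Tm C) : Tm C :=
  .lam (.app (.app (.const cXi) t1.lift)
    (match t2 with
     | .lam b => .lam (b.bind fun n => match n with
         | 0 => .app (.var 1) (.var 0)
         | m + 1 => .var (m + 2))
     | t2 => .lam (.app t2.lift.lift (.app (.var 1) (.var 0)))))

/-- `A_τ` : `A_o = H`, `A_τ` a constant for `τ ∈ B`, and `A_{τ₁→τ₂} = F A_{τ₁} A_{τ₂}`. -/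
def Atm : PRED2.Ty B → Tm (SCon B Con)
  | .o => Hc SCon.L
  | .base b => .const (SCon.A b)
  | .arr b τ => Ft SCon.Xi (.const (SCon.A b)) (Atm τ)

/-- The translation `⟦-⟧` from terms of PRED2₀ to λ-terms of `I₀`.  The argument
`env` assigns de Bruijn indices to the (named) free variables of PRED2₀. -/
def tr (env : PRED2.Ty B × Nat → Nat) :
    {τ : PRED2.Ty B} → Trm B Con τ → Tm (SCon B Con)
  | _, .var τ n => .var (env (τ, n))
  | _, .con c => .const (SCon.sig c)
  | _, .app f a => .app (tr env f) (tr env a)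
  | _, .imp φ ψ => impTm SCon.Xi (tr env φ) (tr env ψ)
  | _, .all τ _ m φ =>
      .app (.app (XiT (SCon.Xi : SCon B Con)) (Atm τ))
        (.lam (tr (fun y => if y = (τ, m) then 0 else env y + 1) φ))

/-- The context `Γ(Δ)` associated to a set `Δ` of formulas: it consists of
`A_τ x` for every free variable `x` of `Δ` of type `τ`, `A_τ c` for every
constant `c` of type `τ` of the signature, `L A_τ` for every base type `τ`,
and `A_τ y` for every base type `τ` and the chosen variable `y = yc τ`
(which is intended to be fresh for `Δ`). -/
def GammaSet (env : PRED2.Ty B × Nat → Nat) (Δ : Set (Trm B Con .o)) (yc : B → Nat) :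
    Set (Tm (SCon B Con)) :=
  {t | ∃ (τ : PRED2.Ty B) (x : Nat), (∃ φ ∈ Δ, (τ, x) ∈ FV φ) ∧
        t = .app (Atm τ) (.var (env (τ, x)))} ∪
  {t | ∃ (τ : PRED2.Ty B) (c : Con τ), t = .app (Atm τ) (.const (SCon.sig c))} ∪
  {t | ∃ b : B, t = .app (LT (SCon.L : SCon B Con)) (.const (SCon.A b))} ∪
  {t | ∃ b : B, t = .app (Atm (PRED2.Ty.base b)) (.var (env (PRED2.Ty.base b, yc b)))}

/-- Derivability in `I₀` from an arbitrary set of hypotheses. -/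
def IDerivFrom (Γ : Set (Tm (SCon B Con))) (t : Tm (SCon B Con)) : Prop :=
  ∃ Γ' ⊆ Γ, Γ'.Finite ∧ IDeriv (SCon.Xi : SCon B Con) SCon.L SCon.A false false Γ' t


/-! ### Auxiliary lemmas for the inhabitation theorem -/

section Aux

variable {C : Type}

theorem bind_congr {σ1 σ2 : Nat → Tm C} (h : ∀ n, σ1 n = σ2 n) (t : Tm C) :
    t.bind σ1 = t.bind σ2 :=
  congrFun (congrArg Tm.bind (funext h)) t

theorem Tm_bind_rename (f : Nat → Nat) (σ : Nat → Tm C) (t : Tm C) :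
    (t.rename f).bind σ = t.bind (fun n => σ (f n)) := by
  induction t generalizing f σ with
  | var n => rfl
  | const c => rfl
  | app a b iha ihb => simp only [Tm.rename, Tm.bind, iha, ihb]
  | lam a ih =>
    simp only [Tm.rename, Tm.bind, ih]
    exact congrArg Tm.lam (bind_congr (fun n => by cases n <;> rfl) a)

theorem Tm_bind_varf (f : Nat → Nat) (t : Tm C) :
    t.bind (fun n => .var (f n)) = t.rename f := by
  induction t generalizing f with
  | var n => rfl
  | const c => rfl
  | app a b iha ihb => simp only [Tm.rename, Tm.bind, iha, ihb]
  | lam a ih =>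
    simp only [Tm.rename, Tm.bind]
    rw [← ih]
    exact congrArg Tm.lam (bind_congr (fun n => by cases n <;> rfl) a)

theorem Tm_rename_rename (f g : Nat → Nat) (t : Tm C) :
    (t.rename f).rename g = t.rename (fun n => g (f n)) := by
  rw [← Tm_bind_varf g, Tm_bind_rename, Tm_bind_varf]

theorem Tm_lift_subst0 (t s : Tm C) : t.lift.subst0 s = t := by
  unfold Tm.lift Tm.subst0
  rw [Tm_bind_rename]
  have h : (fun n => (fun n => match n with | 0 => s | m+1 => Tm.var m) (n + 1))
      = (fun n => (Tm.var n : Tm C)) := by funext n; rfl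
  rw [h, Tm_bind_varf]
  have h2 : (fun n => n) = (id : Nat → Nat) := rfl
  induction t with
  | var n => rfl
  | const c => rfl
  | app a b iha ihb => simp only [Tm.rename, iha, ihb]
  | lam a ih =>
    simp only [Tm.rename]
    congr 1
    have h3 : (fun n => match n with | 0 => 0 | m + 1 => m + 1) = (fun n : Nat => n) := by
      funext n; cases n <;> rfl
    rw [h3, ih]

theorem subst0_app (a b s : Tm C) : (Tm.app a b).subst0 s = .app (a.subst0 s) (b.subst0 s) := rfl

theorem Conv.rel' {a b : Tm C} (h : BetaEta a b) : Conv a b := Relation.EqvGen.rel _ _ h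

theorem conv_map {F : Tm C → Tm C} (hF : ∀ {x y : Tm C}, BetaEta x y → BetaEta (F x) (F y))
    {a b : Tm C} (h : Conv a b) : Conv (F a) (F b) := by
  induction h with
  | rel x y h => exact Relation.EqvGen.rel _ _ (hF h)
  | refl x => exact Relation.EqvGen.refl _
  | symm x y _ ih => exact Relation.EqvGen.symm _ _ ih
  | trans x y z _ _ ih1 ih2 => exact Relation.EqvGen.trans _ _ _ ih1 ih2

theorem fvar_finite (t : Tm C) : t.fvar.Finite := by
  induction t with
  | var n => exact Set.finite_singleton n
  | const c => exact Set.finite_empty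
  | app a b iha ihb => exact iha.union ihb
  | lam a ih =>
    have : (Tm.lam a).fvar = (fun n => n + 1) ⁻¹' a.fvar := rfl
    rw [this]
    exact ih.preimage (fun x _ y _ h => Nat.succ_injective h)

theorem fvS_finite {Γ : Set (Tm C)} (h : Γ.Finite) : (fvS Γ).Finite :=
  h.biUnion fun t _ => fvar_finite t

theorem Nsubst (t2 t : Tm C) :
    (Tm.lam (.app t2.lift.lift (.app (.var 1) (.var 0)))).subst0 t
      = .lam (.app t2.lift (.app t.lift (.var 0))) := by
  simp only [Tm.subst0, Tm.bind]
  refine congrArg Tm.lam ?_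
  refine congrArg₂ Tm.app ?_ rfl
  simp only [Tm.lift]
  rw [Tm_rename_rename, Tm_bind_rename, ← Tm_bind_varf (fun n => n + 1)]
  exact bind_congr (fun n => rfl) t2

/-- `(F t₁ t₂) t` converts to `Ξ t₁ (λx. t₂ (t x))`. -/
theorem conv_Ft (cXi : C) (t1 t2 t : Tm C) :
    Conv (.app (Ft cXi t1 t2) t)
      (.app (.app (.const cXi) t1) (.lam (.app t2.lift (.app t.lift (.var 0))))) := by
  -- The match expression in `Ft` is convertible to `N`.
  have hM : Conv (Tm.lam (.app t2.lift.lift (.app (.var 1) (.var 0)))) (match t2 with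
     | .lam b => .lam (b.bind fun n => match n with
         | 0 => .app (.var 1) (.var 0)
         | m + 1 => .var (m + 2))
     | t2 => .lam (.app t2.lift.lift (.app (.var 1) (.var 0)))) := by
    cases t2 with
    | lam b =>
      apply Conv.rel'
      have e : (((b.rename (fun n => match n with | 0 => 0 | m + 1 => m + 2)).rename
            (fun n => match n with | 0 => 0 | m + 1 => m + 2)).subst0
            (Tm.app (.var 1) (.var 0)))
          = b.bind (fun n => match n with
              | 0 => Tm.app (.var 1) (.var 0)
              | m + 1 => .var (m + 2)) := by
        unfold Tm.subst0
        rw [Tm_rename_rename, Tm_bind_rename]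
        exact bind_congr (fun n => by cases n <;> rfl) b
      have hb := BetaEta.lam (C := C) (BetaEta.beta
        ((b.rename (fun n => match n with | 0 => 0 | m + 1 => m + 2)).rename
          (fun n => match n with | 0 => 0 | m + 1 => m + 2))
        (.app (.var 1) (.var 0)))
      rw [e] at hb
      exact hb
    | var n => exact Relation.EqvGen.refl _
    | const c => exact Relation.EqvGen.refl _
    | app a b => exact Relation.EqvGen.refl _
  -- Congruence: replace the match expression by `N` inside `Ft`.
  have h1 : Conv (.app (Ft cXi t1 t2) t)
      (.app (Tm.lam (.app (.app (.const cXi) t1.lift)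
        (.lam (.app t2.lift.lift (.app (.var 1) (.var 0)))))) t) := by
    apply Relation.EqvGen.symm
    exact conv_map (F := fun z => .app (.lam (.app (.app (.const cXi) t1.lift) z)) t)
      (fun h => BetaEta.appL _ (BetaEta.lam (BetaEta.appR _ h))) hM
  refine Relation.EqvGen.trans _ _ _ h1 ?_
  have hb := BetaEta.beta (Tm.app (.app (.const cXi) t1.lift)
    (.lam (.app t2.lift.lift (.app (.var 1) (.var 0))))) t
  have e : (Tm.app (.app (.const cXi) t1.lift)
        (.lam (.app t2.lift.lift (.app (.var 1) (.var 0))))).subst0 t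
      = .app (.app (.const cXi) t1) (.lam (.app t2.lift (.app t.lift (.var 0)))) := by
    rw [subst0_app, subst0_app, Tm_lift_subst0, Nsubst]
    rfl
  rw [e] at hb
  exact Conv.rel' hb

end Aux

theorem inhab {B : Type} [DecidableEq B] {Con : PRED2.Ty B → Type}
    (env : PRED2.Ty B × Nat → Nat) (yc : B → Nat) (τ : PRED2.Ty B) :
    ∃ t : Tm (SCon B Con),
      ∀ Γ : Set (Tm (SCon B Con)), Γ.Finite →
        (∀ b : B, Tm.app (Atm (PRED2.Ty.base b)) (.var (env (PRED2.Ty.base b, yc b))) ∈ Γ) →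
        IDeriv (SCon.Xi : SCon B Con) SCon.L SCon.A false false Γ (.app (Atm τ) t) := by
  induction τ with
  | o => exact ⟨.app (LT SCon.L) (Hc SCon.L), fun Γ _ _ => IDeriv.hi IDeriv.axLH⟩
  | base b => exact ⟨.var (env (PRED2.Ty.base b, yc b)), fun Γ _ h => IDeriv.ax (h b)⟩
  | arr b τ' ih =>
    obtain ⟨s, hs⟩ := ih
    refine ⟨.lam s.lift, ?_⟩
    intro Γ hfin hmem
    set u : Tm (SCon B Con) := .lam (.app (Atm τ').lift s.lift) with hu
    obtain ⟨x, hx⟩ := ((fvS_finite hfin).union (fvar_finite u)).infinite_compl.nonempty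
    have hx1 : x ∉ fvS Γ := fun h => hx (Or.inl h)
    have hx2 : x ∉ u.fvar := fun h => hx (Or.inr h)
    refine IDeriv.eq
      (t1 := .app (.app (XiT (SCon.Xi : SCon B Con)) (.const (SCon.A b))) u) ?_ ?_
    · refine IDeriv.xiI x ?_ (IDeriv.axLA b) hx1 (by simp [Tm.fvar]) hx2
      refine IDeriv.eq (t1 := .app (Atm τ') s)
        (hs _ (hfin.insert _) (fun b' => Set.mem_insert_of_mem _ (hmem b'))) ?_
      apply Relation.EqvGen.symm
      have hb := BetaEta.beta (Tm.app (Atm (Con := Con) τ').lift s.lift) (.var x)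
      have e : (Tm.app (Atm (Con := Con) τ').lift s.lift).subst0 (.var x)
          = .app (Atm τ') s := by
        rw [subst0_app, Tm_lift_subst0, Tm_lift_subst0]
      rw [e] at hb
      exact Conv.rel' hb
    · apply Relation.EqvGen.symm
      refine Relation.EqvGen.trans _ _ _
        (conv_Ft (SCon.Xi : SCon B Con) (.const (SCon.A b)) (Atm τ') (.lam s.lift)) ?_
      have inner : Conv (Tm.app (Tm.lam (Tm.lift s)).lift (.var (0 : Nat)))
          (Tm.lift s (C := SCon B Con)) := by
        have hb := BetaEta.beta
          ((Tm.lift s).rename (fun n => match n with | 0 => 0 | m + 1 => m + 2)) (.var 0)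
        have e2 : (((Tm.lift s).rename
              (fun n => match n with | 0 => 0 | m + 1 => m + 2)).subst0 (.var 0))
            = Tm.lift s (C := SCon B Con) := by
          simp only [Tm.lift]
          unfold Tm.subst0
          rw [Tm_rename_rename, Tm_bind_rename, ← Tm_bind_varf (fun n => n + 1)]
        rw [e2] at hb
        exact Conv.rel' hb
      exact conv_map
        (F := fun z => Tm.app (.app (.const SCon.Xi) (.const (SCon.A b)))
          (.lam (.app (Atm (Con := Con) τ').lift z)))
        (fun h => BetaEta.appR _ (BetaEta.lam (BetaEta.appR _ h))) inner

/-- **Inhabitation of types (Lemma 5.2).**  For any type `τ` of PRED2₀ and any finite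
set `Δ` of PRED2₀ formulas, there exists a λ-term `t` with `Γ(Δ) ⊢ A_τ t` in `I₀`.
(`env` is an injective assignment of illative variables to PRED2₀ variables, and
`yc` chooses, for each base type, a variable fresh for `Δ`.) -/
theorem types_nonempty {B : Type} [DecidableEq B] [Finite B]
    {Con : PRED2.Ty B → Type} [∀ τ' : PRED2.Ty B, Countable (Con τ')]
    (env : PRED2.Ty B × Nat → Nat) (henv : Function.Injective env)
    (τ : PRED2.Ty B) (Δ : Set (Trm B Con .o)) (hΔ : Δ.Finite)
    (yc : B → Nat) (hyc : ∀ b : B, ∀ ψ ∈ Δ, (PRED2.Ty.base b, yc b) ∉ FV ψ) :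
    ∃ t : Tm (SCon B Con), IDerivFrom (GammaSet env Δ yc) (.app (Atm τ) t) := by
  obtain ⟨t, ht⟩ := inhab (Con := Con) env yc τ
  refine ⟨t, Set.range (fun b : B =>
      Tm.app (Atm (PRED2.Ty.base b)) (.var (env (PRED2.Ty.base b, yc b)))), ?_,
    Set.finite_range _, ht _ (Set.finite_range _) (fun b => ⟨b, rfl⟩)⟩
  rintro z ⟨b, rfl⟩
  exact Set.mem_union_right _ ⟨b, rfl⟩

end Embed
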